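/- If f is a budget-balanced distribution rule for a welfare function W = (𝒯, Q) (with W(∅) = 0) on a finite player set N that guarantees the existence of a pure Nash equilibrium in all games in G(N, f, W), then for each recursively defined basis distribution rule f^T there exists a weight system ω^T such that f^T = f^T_{GWSV}[ω^T]; in particular each f^T is nonnegative. -/

import Mathlib

open scoped BigOperators Classical

namespace CostSharing

/-- A welfare sharing game on player set `N`: a finite resource set, a nonempty
finite action set (a collection of subsets of resources) for each player, and a
local welfare function at each resource. -/
structure Game (N : Type) [Fintype N] [DecidableEq N] where
  R : Type
  [finR : Fintype R]
  [decR : DecidableEq R]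
  act : N → Finset (Finset R)
  act_nonempty : ∀ i, (act i).Nonempty
  Wr : R → Finset N → ℝ

attribute [instance] Game.finR Game.decR

variable {N : Type} [Fintype N] [DecidableEq N]

/-- `{a}_r`: the set of players choosing resource `r` in profile `a`. -/
def playersAt {G : Game N} (a : N → Finset G.R) (r : G.R) : Finset N :=
  Finset.univ.filter fun i => r ∈ a i

/-- Player `i`'s utility, where `fD` assigns to each local welfare function its
local distribution rule (so resources with identical welfare functions have
identical distribution rules). -/
noncomputable def utility (G : Game N) (fD : (Finset N → ℝ) → N → Finset N → ℝ)
    (a : N → Finset G.R) (i : N) : ℝ :=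
  ∑ r ∈ a i, fD (G.Wr r) i (playersAt a r)

/-- Pure Nash equilibrium. -/
def IsPNE (G : Game N) (fD : (Finset N → ℝ) → N → Finset N → ℝ)
    (a : N → Finset G.R) : Prop :=
  (∀ i, a i ∈ G.act i) ∧
    ∀ i : N, ∀ b ∈ G.act i,
      utility G fD (Function.update a i b) i ≤ utility G fD a i

/-- Every game in the class `G(N, f^𝕎, 𝕎)` possesses a pure Nash equilibrium. -/
def GuaranteesPNE (𝕎 : Set (Finset N → ℝ))
    (fD : (Finset N → ℝ) → N → Finset N → ℝ) : Prop :=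
  ∀ G : Game N, (∀ r : G.R, G.Wr r ∈ 𝕎) → ∃ a, IsPNE G fD a

/-- Every game in the single-welfare-function class `G(N, f, W)` possesses a
pure Nash equilibrium. -/
def GuaranteesPNE1 (W : Finset N → ℝ) (f : N → Finset N → ℝ) : Prop :=
  ∀ G : Game N, (∀ r : G.R, G.Wr r = W) → ∃ a, IsPNE G (fun _ => f) a

/-- A distribution rule allocates nothing to absent players. -/
def DistRule (f : N → Finset N → ℝ) : Prop :=
  ∀ (i : N) (S : Finset N), i ∉ S → f i S = 0

/-- Budget balance: `∑_{i∈S} f(i,S) = W(S)`. -/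
def BudgetBalanced (W : Finset N → ℝ) (f : N → Finset N → ℝ) : Prop :=
  ∀ S : Finset N, ∑ i ∈ S, f i S = W S

/-- The inclusion (unanimity) welfare function `W^T`. -/
def unanimity (T S : Finset N) : ℝ := if T ⊆ S then 1 else 0

/-- The basis coefficient `q^W_T` of `W` on the unanimity basis (Möbius inversion). -/
def coeff (W : Finset N → ℝ) (T : Finset N) : ℝ :=
  ∑ R ∈ T.powerset, (-1 : ℝ) ^ (T.card - R.card) * W R

/-- The support `𝒯^W` of the basis representation of `W`. -/
noncomputable def supp (W : Finset N → ℝ) : Finset (Finset N) :=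
  Finset.univ.filter fun T => coeff W T ≠ 0

/-- `𝒯^W(S)`: the contributing coalitions within `S`. -/
noncomputable def suppIn (W : Finset N → ℝ) (S : Finset N) : Finset (Finset N) :=
  (supp W).filter (· ⊆ S)

/-- `N^W(S)`: the contributing players within `S`. -/
noncomputable def contributors (W : Finset N → ℝ) (S : Finset N) : Finset N :=
  (suppIn W S).biUnion id

/-- A weight system `ω = (λ, Σ)`: strictly positive player weights together with
an ordered partition of `N`. -/
structure WeightSystem (N : Type) [Fintype N] [DecidableEq N] where
  lam : N → ℝ
  lam_pos : ∀ i, 0 < lam i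
  m : ℕ
  part : Fin m → Finset N
  part_nonempty : ∀ k, (part k).Nonempty
  part_disjoint : ∀ k l, k ≠ l → Disjoint (part k) (part l)
  part_covers : ∀ i : N, ∃ k, i ∈ part k

/-- The index of the block of the ordered partition containing player `i`. -/
noncomputable def WeightSystem.idx (ω : WeightSystem N) (i : N) : Fin ω.m :=
  (ω.part_covers i).choose

/-- `T̄ = T ∩ S_k` where `k = min {j : S_j ∩ T ≠ ∅}`. -/
noncomputable def WeightSystem.bar (ω : WeightSystem N) (T : Finset N) : Finset N :=
  T.filter fun i => ∀ j ∈ T, ω.idx i ≤ ω.idx j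

/-- The generalized weighted Shapley value basis rule `f^T_{GWSV}[ω]`. -/
noncomputable def fGWSVbasis (ω : WeightSystem N) (T : Finset N) (i : N)
    (S : Finset N) : ℝ :=
  if i ∈ ω.bar T ∧ T ⊆ S then ω.lam i / ∑ j ∈ ω.bar T, ω.lam j else 0

/-- The generalized weighted marginal contribution basis rule `f^T_{GWMC}[ω]`. -/
noncomputable def fGWMCbasis (ω : WeightSystem N) (T : Finset N) (i : N)
    (S : Finset N) : ℝ :=
  if i ∈ ω.bar T ∧ T ⊆ S then ω.lam i else 0

/-- The generalized weighted Shapley value distribution rule `f^{W'}_{GWSV}[ω]`. -/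
noncomputable def fGWSV (ω : WeightSystem N) (W' : Finset N → ℝ) (i : N)
    (S : Finset N) : ℝ :=
  ∑ T ∈ supp W', coeff W' T * fGWSVbasis ω T i S

/-- The generalized weighted marginal contribution distribution rule
`f^{W''}_{GWMC}[ω]`. -/
noncomputable def fGWMC (ω : WeightSystem N) (W'' : Finset N → ℝ) (i : N)
    (S : Finset N) : ℝ :=
  ∑ T ∈ supp W'', coeff W'' T * fGWMCbasis ω T i S

/-- The recursively defined basis distribution rules `f^T` of a distribution
rule `f` for `W` (recursion along the min-partition of `(𝒯^W, ⊆)`). -/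
noncomputable def basisRule (W : Finset N → ℝ) (f : N → Finset N → ℝ)
    (T : Finset N) (i : N) (S : Finset N) : ℝ :=
  if T ⊆ S then
    (1 / coeff W T) *
      (f i T - ∑ T' ∈ ((suppIn W T).erase T).attach,
        coeff W T'.1 * basisRule W f T'.1 i S)
  else 0
termination_by T.card
decreasing_by
  have h := T'.2
  simp only [Finset.mem_erase, suppIn, Finset.mem_filter] at h
  exact Finset.card_lt_card (Finset.ssubset_iff_subset_ne.mpr ⟨h.2.2, h.1⟩)


/-!
Write each share `f i` in the unanimity basis, with coefficients `coeff (f i) S`. Möbius inversion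
unwinds the recursion defining `f^T` to `f^T(i, S) = coeff (f i) T / coeff W T` for `T ⊆ S`, and
budget balance gives `∑ i ∈ S, coeff (f i) S = coeff W S`.

The equilibrium hypothesis is used on a single game. For players `u ≠ v` in `S` let
`O = S \ {u, v}`; the resources are pairs `(D, k)` with `D ⊆ O` and a label `k : Bool`. Each
`w ∈ O` uses every `(D, k)` with `w ∈ D`, player `u` picks a label `x` and uses every `(D, x)`, and
player `v` picks `y` and uses every `(D, y ^^ e D)`, where `e D` is the parity of `|O| - |D|`. This
parity twist makes a flip of one's own label change one's utility by `± coeff (f u) S`, resp.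
`± coeff (f v) S`, with the same sign for both players, so at an equilibrium the two coefficients
cannot have opposite signs. Hence the `coeff (f i) S`, `i ∈ S`, all have the sign of their sum
`coeff W S`: they vanish off the support, and on it the ratios `coeff (f i) T / coeff W T` are
nonnegative weights summing to `1`, i.e. a generalized weighted Shapley value whose first block is
the set of players of positive weight.
-/

section Mobius

variable {α : Type}

theorem coeff_congr {g g' : Finset α → ℝ} {S : Finset α} (h : ∀ R ⊆ S, g R = g' R) :
    coeff g S = coeff g' S :=
  Finset.sum_congr rfl fun R hR => by rw [h R (Finset.mem_powerset.mp hR)]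

theorem coeff_insert [DecidableEq α] (g : Finset α → ℝ) {a : α} {S : Finset α} (ha : a ∉ S) :
    coeff g (insert a S) = coeff (fun R => g (insert a R) - g R) S := by
  rw [coeff, Finset.sum_powerset_insert ha, coeff, ← Finset.sum_add_distrib]
  refine Finset.sum_congr rfl fun R hR => ?_
  have hRS : R.card ≤ S.card := Finset.card_le_card (Finset.mem_powerset.mp hR)
  have haR : a ∉ R := fun h => ha (Finset.mem_powerset.mp hR h)
  rw [Finset.card_insert_of_notMem ha, Finset.card_insert_of_notMem haR, Nat.succ_sub hRS,
    Nat.add_sub_add_right, pow_succ]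
  ring

theorem sum_powerset_coeff [DecidableEq α] (g : Finset α → ℝ) (S : Finset α) :
    ∑ R ∈ S.powerset, coeff g R = g S := by
  induction S using Finset.induction_on generalizing g with
  | empty => simp [coeff]
  | insert a S ha ih =>
    rw [Finset.sum_powerset_insert ha, ih,
      Finset.sum_congr rfl fun R hR => coeff_insert g fun h => ha (Finset.mem_powerset.mp hR h),
      ih]
    ring

theorem coeff_sum {ι : Type*} (s : Finset ι) (g : ι → Finset α → ℝ) (S : Finset α) :
    coeff (fun R => ∑ i ∈ s, g i R) S = ∑ i ∈ s, coeff (g i) S := by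
  simp only [coeff, Finset.mul_sum]
  exact Finset.sum_comm

theorem coeff_eq_zero_of_notMem {g : Finset α → ℝ} {i : α} (hg : ∀ R, i ∉ R → g R = 0)
    {S : Finset α} (hi : i ∉ S) : coeff g S = 0 :=
  Finset.sum_eq_zero fun R hR => by
    rw [hg R fun h => hi (Finset.mem_powerset.mp hR h), mul_zero]

theorem coeff_insert_insert [DecidableEq α] {g : Finset α → ℝ} {u v : α}
    (hg : ∀ R, u ∉ R → g R = 0) {O : Finset α} (hu : u ∉ O) (hv : v ∉ O) (huv : u ≠ v) :
    coeff g (insert u (insert v O)) =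
      coeff (fun D => g (insert u (insert v D)) - g (insert u D)) O := by
  rw [Finset.insert_comm, coeff_insert g (by simp [huv.symm, hv]), coeff_insert _ hu]
  refine coeff_congr fun D hD => ?_
  have huD : u ∉ D := fun h => hu (hD h)
  rw [Finset.insert_comm u v, hg D huD, hg (insert v D) (by simp [huv, huD])]
  ring

theorem sum_coeff_apply {W : Finset α → ℝ} {f : α → Finset α → ℝ} (hdist : DistRule f)
    (hbb : BudgetBalanced W f) (S : Finset α) : ∑ i ∈ S, coeff (f i) S = coeff W S := by
  rw [← coeff_sum]
  refine coeff_congr fun R hR => ?_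
  rw [← hbb R]
  exact (Finset.sum_subset hR fun i _ hi => hdist i R hi).symm

end Mobius

section ParityGame

variable {α : Type}

def evenCodim (O D : Finset α) : Bool := decide (Even (O.card - D.card))

theorem sum_ite_not_sub_sum_ite (h₁ h₀ : Finset α → ℝ) (O : Finset α) (t : Bool) :
    ∑ D ∈ O.powerset, (if (!t) = evenCodim O D then h₁ D else h₀ D) -
        ∑ D ∈ O.powerset, (if t = evenCodim O D then h₁ D else h₀ D) =
      (if t then -1 else 1) * coeff (fun D => h₁ D - h₀ D) O := by
  rw [← Finset.sum_sub_distrib, coeff, Finset.mul_sum]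
  refine Finset.sum_congr rfl fun D _ => ?_
  rw [neg_one_pow_eq_ite, evenCodim]
  by_cases h : Even (O.card - D.card) <;> cases t <;> simp [h]

variable [DecidableEq α] (u v : α) (O : Finset α)

def parityAction (i : α) (x : Bool) : Finset (Finset α × Bool) :=
  if i = u then O.powerset.image fun D => (D, x)
  else if i = v then O.powerset.image fun D => (D, (x ^^ evenCodim O D))
  else {D ∈ O.powerset | i ∈ D} ×ˢ Finset.univ

def parityProfile (c : α → Bool) (i : α) : Finset (Finset α × Bool) :=
  parityAction u v O i (c i)

variable {u v O}

theorem mem_parityAction {i : α} {x k : Bool} {D : Finset α} :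
    (D, k) ∈ parityAction u v O i x ↔
      D ⊆ O ∧ if i = u then k = x else if i = v then k = (x ^^ evenCodim O D) else i ∈ D := by
  unfold parityAction
  split_ifs <;> aesop

theorem update_parityProfile (c : α → Bool) (i : α) (x : Bool) :
    Function.update (parityProfile u v O c) i (parityAction u v O i x) =
      parityProfile u v O (Function.update c i x) :=
  funext fun j => (Function.apply_update (parityAction u v O) c i x j).symm

end ParityGame

abbrev parityGame (u v : N) (O : Finset N) (W : Finset N → ℝ) : Game N where
  R := Finset N × Bool
  act i := Finset.univ.image (parityAction u v O i)
  act_nonempty _ := Finset.univ_nonempty.image _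
  Wr _ := W

section ParityGameUtility

variable {u v : N} {O : Finset N} (W : Finset N → ℝ) (f : N → Finset N → ℝ) (c : N → Bool)

theorem utility_parityGame_left (huv : u ≠ v) (hv : v ∉ O) :
    utility (parityGame u v O W) (fun _ => f) (parityProfile u v O c) u =
      ∑ D ∈ O.powerset,
        f u (insert u (if (c u ^^ c v) = evenCodim O D then insert v D else D)) := by
  dsimp only [utility]
  rw [parityProfile, parityAction, if_pos rfl, Finset.sum_image (by simp)]
  refine Finset.sum_congr rfl fun D hD => congrArg (f u) ?_
  have hD : D ⊆ O := Finset.mem_powerset.mp hD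
  have hvD : v ∉ D := fun h => hv (hD h)
  ext w
  simp only [playersAt, parityProfile, Finset.mem_filter, Finset.mem_univ, true_and,
    mem_parityAction, hD]
  rcases eq_or_ne w u with rfl | hwu
  · simp
  rcases eq_or_ne w v with rfl | hwv
  · have hxor : ∀ a b e : Bool, a = (b ^^ e) ↔ (a ^^ b) = e := by decide
    by_cases hmeet : (c u ^^ c w) = evenCodim O D <;> simp [hxor, hmeet, huv.symm, hvD]
  · simp only [if_neg hwu, if_neg hwv]
    split_ifs <;> simp [hwu, hwv]

theorem utility_parityGame_right (huv : u ≠ v) (hu : u ∉ O) :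
    utility (parityGame u v O W) (fun _ => f) (parityProfile u v O c) v =
      ∑ D ∈ O.powerset,
        f v (insert v (if (c u ^^ c v) = evenCodim O D then insert u D else D)) := by
  dsimp only [utility]
  rw [parityProfile, parityAction, if_neg huv.symm, if_pos rfl,
    Finset.sum_image fun _ _ _ _ h => (Prod.mk.inj h).1]
  refine Finset.sum_congr rfl fun D hD => congrArg (f v) ?_
  have hD : D ⊆ O := Finset.mem_powerset.mp hD
  have huD : u ∉ D := fun h => hu (hD h)
  ext w
  simp only [playersAt, parityProfile, Finset.mem_filter, Finset.mem_univ, true_and,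
    mem_parityAction, hD]
  rcases eq_or_ne w v with rfl | hwv
  · simp [huv.symm]
  rcases eq_or_ne w u with rfl | hwu
  · have hxor : ∀ a b e : Bool, (b ^^ e) = a ↔ (a ^^ b) = e := by decide
    by_cases hmeet : (c w ^^ c v) = evenCodim O D <;> simp [hxor, hmeet, huv, huD]
  · simp only [if_neg hwu, if_neg hwv]
    split_ifs <;> simp [hwu, hwv]

theorem utility_parityGame_left_gain (hf : ∀ R, u ∉ R → f u R = 0) (huv : u ≠ v) (hu : u ∉ O)
    (hv : v ∉ O) :
    utility (parityGame u v O W) (fun _ => f)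
        (Function.update (parityProfile u v O c) u (parityAction u v O u (!c u))) u -
      utility (parityGame u v O W) (fun _ => f) (parityProfile u v O c) u =
    (if (c u ^^ c v) then -1 else 1) * coeff (f u) (insert u (insert v O)) := by
  rw [update_parityProfile, utility_parityGame_left W f _ huv hv,
    utility_parityGame_left W f c huv hv, Function.update_self,
    Function.update_of_ne huv.symm, Bool.not_xor, coeff_insert_insert hf hu hv huv]
  simp only [apply_ite (f u), apply_ite (insert u : Finset N → Finset N)]
  exact sum_ite_not_sub_sum_ite _ _ O _

theorem utility_parityGame_right_gain (hf : ∀ R, v ∉ R → f v R = 0) (huv : u ≠ v) (hu : u ∉ O)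
    (hv : v ∉ O) :
    utility (parityGame u v O W) (fun _ => f)
        (Function.update (parityProfile u v O c) v (parityAction u v O v (!c v))) v -
      utility (parityGame u v O W) (fun _ => f) (parityProfile u v O c) v =
    (if (c u ^^ c v) then -1 else 1) * coeff (f v) (insert u (insert v O)) := by
  rw [update_parityProfile, utility_parityGame_right W f _ huv hu,
    utility_parityGame_right W f c huv hu, Function.update_self,
    Function.update_of_ne huv, Bool.xor_not, Finset.insert_comm,
    coeff_insert_insert hf hv hu huv.symm]
  simp only [apply_ite (f v), apply_ite (insert v : Finset N → Finset N)]
  exact sum_ite_not_sub_sum_ite _ _ O _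

end ParityGameUtility

theorem coeff_mul_coeff_nonneg_of_guaranteesPNE {W : Finset N → ℝ} {f : N → Finset N → ℝ}
    (hdist : DistRule f) (hPNE : GuaranteesPNE1 W f) {u v : N} {S : Finset N}
    (hu : u ∈ S) (hv : v ∈ S) : 0 ≤ coeff (f u) S * coeff (f v) S := by
  rcases eq_or_ne u v with rfl | huv
  · exact mul_self_nonneg _
  set O := (S.erase u).erase v
  have huO : u ∉ O := fun h => (Finset.mem_erase.mp (Finset.mem_erase.mp h).2).1 rfl
  have hvO : v ∉ O := fun h => (Finset.mem_erase.mp h).1 rfl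
  have hS : insert u (insert v O) = S := by
    rw [Finset.insert_erase (Finset.mem_erase.mpr ⟨huv.symm, hv⟩), Finset.insert_erase hu]
  obtain ⟨a, hact, hbest⟩ := hPNE (parityGame u v O W) fun _ => rfl
  choose c _ hc using fun i => Finset.mem_image.mp (hact i)
  obtain rfl : parityProfile u v O c = a := funext hc
  have hgain_u := hbest u _ (Finset.mem_image_of_mem _ (Finset.mem_univ (!c u)))
  have hgain_v := hbest v _ (Finset.mem_image_of_mem _ (Finset.mem_univ (!c v)))
  rw [← sub_nonpos, utility_parityGame_left_gain W f c (hdist u) huv huO hvO, hS] at hgain_u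
  rw [← sub_nonpos, utility_parityGame_right_gain W f c (hdist v) huv huO hvO, hS] at hgain_v
  split_ifs at hgain_u hgain_v <;> nlinarith

theorem sq_le_mul_sum_of_pairwise_mul_nonneg {ι : Type*} {s : Finset ι} {x : ι → ℝ}
    (h : ∀ i ∈ s, ∀ j ∈ s, 0 ≤ x i * x j) {i : ι} (hi : i ∈ s) :
    x i ^ 2 ≤ x i * ∑ j ∈ s, x j := by
  rw [sq, Finset.mul_sum]
  exact Finset.single_le_sum (h i hi) hi

section GuaranteesPNE

variable {W : Finset N → ℝ} {f : N → Finset N → ℝ} (hdist : DistRule f)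
  (hbb : BudgetBalanced W f) (hPNE : GuaranteesPNE1 W f)
include hdist hbb hPNE

theorem coeff_apply_eq_zero_of_notMem_supp {S : Finset N} (hS : S ∉ supp W) (i : N) :
    coeff (f i) S = 0 := by
  by_cases hi : i ∈ S
  · have hW : coeff W S = 0 := by simpa [supp] using hS
    have hsq := sq_le_mul_sum_of_pairwise_mul_nonneg (x := fun j => coeff (f j) S)
      (fun j hj k hk => coeff_mul_coeff_nonneg_of_guaranteesPNE hdist hPNE hj hk) hi
    rw [sum_coeff_apply hdist hbb, hW, mul_zero] at hsq
    exact pow_eq_zero_iff two_ne_zero |>.mp (le_antisymm hsq (sq_nonneg _))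
  · exact coeff_eq_zero_of_notMem (hdist i) hi

theorem coeff_apply_div_coeff_nonneg (i : N) (S : Finset N) :
    0 ≤ coeff (f i) S / coeff W S := by
  refine div_nonneg_iff.mpr (mul_nonneg_iff.mp ?_)
  by_cases hi : i ∈ S
  · rw [← sum_coeff_apply hdist hbb]
    exact (sq_nonneg _).trans <| sq_le_mul_sum_of_pairwise_mul_nonneg
      (fun j hj k hk => coeff_mul_coeff_nonneg_of_guaranteesPNE hdist hPNE hj hk) hi
  · rw [coeff_eq_zero_of_notMem (hdist i) hi, zero_mul]

end GuaranteesPNE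

theorem basisRule_eq_div {W : Finset N → ℝ} {f : N → Finset N → ℝ}
    (hvanish : ∀ R ∉ supp W, ∀ i, coeff (f i) R = 0) (T : Finset N) (i : N) (S : Finset N) :
    basisRule W f T i S = if T ⊆ S then coeff (f i) T / coeff W T else 0 := by
  induction T using Finset.strongInduction with
  | _ T ih =>
  rw [basisRule]
  split_ifs with hTS
  · have hrec : ∑ T' ∈ ((suppIn W T).erase T).attach, coeff W T'.1 * basisRule W f T'.1 i S =
        ∑ T' ∈ (suppIn W T).erase T, coeff (f i) T' := by
      rw [← Finset.sum_attach _ fun T' => coeff (f i) T']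
      refine Finset.sum_congr rfl fun ⟨T', hT'⟩ _ => ?_
      obtain ⟨hne, hsupp, hsub⟩ : T' ≠ T ∧ T' ∈ supp W ∧ T' ⊆ T := by
        simpa [suppIn] using hT'
      have hq : coeff W T' ≠ 0 := by simpa [supp] using hsupp
      rw [ih T' (Finset.ssubset_iff_subset_ne.mpr ⟨hsub, hne⟩), if_pos (hsub.trans hTS)]
      field_simp
    have hsplit : f i T = coeff (f i) T + ∑ T' ∈ (suppIn W T).erase T, coeff (f i) T' := by
      rw [← sum_powerset_coeff (f i) T, ← Finset.add_sum_erase _ _ (Finset.mem_powerset_self T)]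
      congr 1
      refine (Finset.sum_subset (Finset.erase_subset_erase _ fun R hR => ?_)
        fun R hR hR' => ?_).symm
      · exact Finset.mem_powerset.mpr (Finset.mem_filter.mp hR).2
      · refine hvanish R (fun hsupp => hR' ?_) i
        obtain ⟨hne, hsub⟩ := Finset.mem_erase.mp hR
        exact Finset.mem_erase.mpr ⟨hne, Finset.mem_filter.mpr ⟨hsupp, Finset.mem_powerset.mp hsub⟩⟩
    rw [hrec, hsplit, add_sub_cancel_right, one_div, inv_mul_eq_div]
  · rfl

theorem WeightSystem.idx_eq_of_mem (ω : WeightSystem N) {i : N} {k : Fin ω.m}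
    (h : i ∈ ω.part k) : ω.idx i = k :=
  by_contra fun hne =>
    Finset.disjoint_left.mp (ω.part_disjoint _ _ hne) (ω.part_covers i).choose_spec h

def WeightSystem.ofRank (lam : N → ℝ) (hlam : ∀ i, 0 < lam i) {m : ℕ} (ρ : N → Fin m)
    (hρ : Function.Surjective ρ) : WeightSystem N where
  lam := lam
  lam_pos := hlam
  m := m
  part k := {i | ρ i = k}
  part_nonempty k := (hρ k).imp fun i hi => by simpa using hi
  part_disjoint _ _ hkl := Finset.disjoint_filter.mpr fun _ _ hk hl => hkl (hk ▸ hl)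
  part_covers i := ⟨ρ i, by simp⟩

theorem WeightSystem.idx_ofRank (lam : N → ℝ) (hlam : ∀ i, 0 < lam i) {m : ℕ} (ρ : N → Fin m)
    (hρ : Function.Surjective ρ) (i : N) : (ofRank lam hlam ρ hρ).idx i = ρ i :=
  idx_eq_of_mem _ (by simp [ofRank])

theorem exists_surjective_rank_minimal_iff (B : Finset N) (hB : B.Nonempty) :
    ∃ m, ∃ ρ : N → Fin m, Function.Surjective ρ ∧ ∀ i, (∀ j, ρ i ≤ ρ j) ↔ i ∈ B := by
  obtain ⟨b, hb⟩ := hB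
  by_cases hBu : B = Finset.univ
  · exact ⟨1, fun _ => 0, fun k => ⟨b, Subsingleton.elim _ _⟩, fun i => by simp [hBu]⟩
  obtain ⟨j₀, -, hj₀⟩ := Finset.exists_of_ssubset (Finset.ssubset_univ_iff.mpr hBu)
  refine ⟨2, fun i => if i ∈ B then 0 else 1, fun k => ?_, fun i => ?_⟩
  · fin_cases k
    exacts [⟨b, by simp [hb]⟩, ⟨j₀, by simp [hj₀]⟩]
  · by_cases hi : i ∈ B
    · simp [hi]
    · simpa [hi] using ⟨b, hb⟩

theorem exists_weightSystem_bar_eq (lam : N → ℝ) (hlam : ∀ i, 0 < lam i) {B T : Finset N}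
    (hB : B.Nonempty) (hBT : B ⊆ T) : ∃ ω : WeightSystem N, ω.lam = lam ∧ ω.bar T = B := by
  obtain ⟨m, ρ, hρ, hmin⟩ := exists_surjective_rank_minimal_iff B hB
  obtain ⟨b, hb⟩ := hB
  refine ⟨WeightSystem.ofRank lam hlam ρ hρ, rfl, Finset.ext fun i => ?_⟩
  simp only [WeightSystem.bar, Finset.mem_filter, WeightSystem.idx_ofRank]
  constructor
  · rintro ⟨-, hi⟩
    exact (hmin i).mp fun j => (hi b (hBT hb)).trans ((hmin b).mpr hb j)
  · intro hi
    exact ⟨hBT hi, fun j _ => (hmin i).mpr hi j⟩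

theorem exists_weightSystem_fGWSVbasis_eq {T : Finset N} (r : N → ℝ) (hr : ∀ i, 0 ≤ r i)
    (hrT : ∀ i ∉ T, r i = 0) (hsum : ∑ i ∈ T, r i = 1) :
    ∃ ω : WeightSystem N, ∀ i S, fGWSVbasis ω T i S = if T ⊆ S then r i else 0 := by
  set B := {i ∈ T | r i ≠ 0}
  have hsumB : ∑ i ∈ B, r i = 1 := by rw [Finset.sum_filter_ne_zero, hsum]
  have hB : B.Nonempty := Finset.nonempty_of_sum_ne_zero (by rw [hsumB]; exact one_ne_zero)
  obtain ⟨ω, hlam, hbar⟩ := exists_weightSystem_bar_eq (fun i => if r i = 0 then 1 else r i)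
    (fun i => by split_ifs with h; exacts [one_pos, (hr i).lt_of_ne' h])
    hB (Finset.filter_subset _ T)
  have hlamB : ∀ i ∈ B, ω.lam i = r i := fun i hi => by
    rw [hlam]
    exact if_neg (Finset.mem_filter.mp hi).2
  refine ⟨ω, fun i S => ?_⟩
  rw [fGWSVbasis, hbar, Finset.sum_congr rfl hlamB, hsumB, div_one]
  by_cases hiB : i ∈ B
  · simp [hiB, hlamB i hiB]
  · have hri : r i = 0 := by
      by_contra h
      exact hiB (Finset.mem_filter.mpr ⟨by_contra fun hiT => h (hrT i hiT), h⟩)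
    simp [hiB, hri]

theorem basisRule_is_gwsv_general (N : Type) [Fintype N] [DecidableEq N]
    (W : Finset N → ℝ) (f : N → Finset N → ℝ)
    (hdist : DistRule f) (hbb : BudgetBalanced W f)
    (hPNE : GuaranteesPNE1 W f) :
    ∀ T ∈ supp W, ∃ ω : WeightSystem N,
      (∀ (i : N) (S : Finset N), basisRule W f T i S = fGWSVbasis ω T i S) ∧
      ∀ (i : N) (S : Finset N), 0 ≤ basisRule W f T i S := by
  intro T hT
  have hq : coeff W T ≠ 0 := (Finset.mem_filter.mp hT).2
  have hnonneg := coeff_apply_div_coeff_nonneg hdist hbb hPNE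
  have hbasis := basisRule_eq_div
    (fun _ hR => coeff_apply_eq_zero_of_notMem_supp hdist hbb hPNE hR) T
  obtain ⟨ω, hω⟩ := exists_weightSystem_fGWSVbasis_eq (fun i => coeff (f i) T / coeff W T)
    (fun i => hnonneg i T)
    (fun i hi => by rw [coeff_eq_zero_of_notMem (hdist i) hi, zero_div])
    (by rw [← Finset.sum_div, sum_coeff_apply hdist hbb, div_self hq])
  refine ⟨ω, fun i S => by rw [hbasis, hω], fun i S => ?_⟩
  rw [hbasis]
  split_ifs
  exacts [hnonneg i T, le_rfl]

/-- **Lemma 4.3.** If `f` is a budget-balanced distribution rule for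
`W = (𝒯, Q)` guaranteeing a pure Nash equilibrium in all games in
`G(N, f, W)`, then each recursively defined basis distribution rule `f^T`
equals `f^T_{GWSV}[ω^T]` for some weight system `ω^T`; in particular each
`f^T` is nonnegative. -/
theorem basisRule_is_gwsv (N : Type) [Fintype N] [DecidableEq N]
    (hN : 1 < Fintype.card N)
    (W : Finset N → ℝ) (f : N → Finset N → ℝ)
    (hW0 : W ∅ = 0) (hdist : DistRule f) (hbb : BudgetBalanced W f)
    (hPNE : GuaranteesPNE1 W f) :
    ∀ T ∈ supp W, ∃ ω : WeightSystem N,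
      (∀ (i : N) (S : Finset N), basisRule W f T i S = fGWSVbasis ω T i S) ∧
      ∀ (i : N) (S : Finset N), 0 ≤ basisRule W f T i S :=
  basisRule_is_gwsv_general N W f hdist hbb hPNE

end CostSharing
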